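/- arXiv:1908.09750 — 4 statements merged into one kernel-verified Lean document; each statement's English description precedes it below -/
import Mathlib

section
/- Fix a poset Q and a set Υ of upsets of Q. Define two elements a, b ∈ Q to lie in the same uptight region if the set of upsets in Υ containing a equals the set of upsets in Υ containing b. Then the relation on uptight regions given by A ≼ B whenever a ≼ b for some a ∈ A and b ∈ B is reflexive and acyclic (any directed cycle of such relations forces all regions in the cycle to coincide). -/
/-- The uptight region of `a` for the collection `Υ` of upsets: all `b` contained
in exactly the same members of `Υ` as `a`. -/
def uptight {Q : Type} [PartialOrder Q] (Υ : Set (Set Q)) (a : Q) : Set Q :=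
  {b | ∀ U ∈ Υ, a ∈ U ↔ b ∈ U}

/-- The relation `A ≼ B` on uptight regions: some element of `A` is below some
element of `B`. -/
def regRel {Q : Type} [PartialOrder Q] (A B : Set Q) : Prop :=
  ∃ a ∈ A, ∃ b ∈ B, a ≤ b

lemma regRel_mono {Q : Type} [PartialOrder Q] (Υ : Set (Set Q))
    (hΥ : ∀ U ∈ Υ, IsUpperSet U) {a b : Q}
    (h : regRel (uptight Υ a) (uptight Υ b)) :
    ∀ U ∈ Υ, a ∈ U → b ∈ U := by
  obtain ⟨a', ha', b', hb', hle⟩ := h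
  intro U hU haU
  exact (hb' U hU).mpr (hΥ U hU hle ((ha' U hU).mp haU))

/-- The relation on uptight regions induced by the partial order of `Q` is
reflexive and acyclic: any directed cycle of relations forces all regions in the
cycle to coincide. -/
theorem statement6 {Q : Type} [PartialOrder Q] (Υ : Set (Set Q))
    (hΥ : ∀ U ∈ Υ, IsUpperSet U) :
    (∀ a : Q, regRel (uptight Υ a) (uptight Υ a)) ∧
    (∀ (n : ℕ) (f : ℕ → Q),
      (∀ i < n, regRel (uptight Υ (f i)) (uptight Υ (f (i + 1)))) →
      regRel (uptight Υ (f n)) (uptight Υ (f 0)) →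
      ∀ i ≤ n, uptight Υ (f i) = uptight Υ (f 0)) := by
  constructor
  · intro a
    exact ⟨a, fun U _ => Iff.rfl, a, fun U _ => Iff.rfl, le_refl a⟩
  · intro n f hchain hclose i hi
    -- forward: for j ≤ k ≤ n, membership propagates from f j to f k
    have fwd : ∀ j k, j ≤ k → k ≤ n → ∀ U ∈ Υ, f j ∈ U → f k ∈ U := by
      intro j k hjk hkn
      induction k with
      | zero =>
        have h0 : j = 0 := Nat.le_zero.mp hjk
        subst h0; exact fun U _ h => h
      | succ k ih =>
        rcases Nat.lt_or_ge j (k+1) with h | h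
        · intro U hU hfj
          exact regRel_mono Υ hΥ (hchain k (Nat.lt_of_lt_of_le (Nat.lt_succ_self k) hkn))
            U hU (ih (Nat.lt_succ_iff.mp h) (Nat.le_of_succ_le hkn) U hU hfj)
        · have : j = k + 1 := le_antisymm hjk h
          subst this
          exact fun U _ h => h
    have h0i : ∀ U ∈ Υ, f 0 ∈ U → f i ∈ U := fwd 0 i (Nat.zero_le i) hi
    have hin : ∀ U ∈ Υ, f i ∈ U → f n ∈ U := fwd i n hi le_rfl
    have hn0 : ∀ U ∈ Υ, f n ∈ U → f 0 ∈ U := regRel_mono Υ hΥ hclose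
    have key : ∀ U ∈ Υ, f i ∈ U ↔ f 0 ∈ U :=
      fun U hU => ⟨fun h => hn0 U hU (hin U hU h), fun h => h0i U hU h⟩
    ext b
    constructor
    · intro hb U hU
      exact (key U hU).symm.trans (hb U hU)
    · intro hb U hU
      exact (key U hU).trans (hb U hU)
end

section
/- Let Q be a poset, M a Q-module, and Υ the set of constant upsets coming from a constant subdivision of Q subordinate to M (i.e., for each constant region I, the upset generated by I and the complement of the downset cogenerated by I). Then the partition of Q into uptight regions for Υ is again a constant subdivision of Q subordinate to M. -/
/-- A module over a poset `Q` with coefficients in a field `k`. -/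
structure PMod (k : Type) [Field k] (Q : Type) [PartialOrder Q] where
  X : Q → Type
  [grp : ∀ q, AddCommGroup (X q)]
  [mod : ∀ q, Module k (X q)]
  map : ∀ {q q' : Q}, q ≤ q' → (X q →ₗ[k] X q')
  map_refl : ∀ q : Q, map (le_refl q) = LinearMap.id
  map_comp : ∀ {q q' q'' : Q} (h : q ≤ q') (h' : q' ≤ q''),
    map (le_trans h h') = (map h').comp (map h)

attribute [instance] PMod.grp PMod.mod

variable {k : Type} [Field k] {Q : Type} [PartialOrder Q]

/-- A homomorphism of poset modules. -/
structure PModHom (M N : PMod k Q) where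
  app : ∀ q, M.X q →ₗ[k] N.X q
  nat : ∀ {q q' : Q} (h : q ≤ q'),
    (N.map h).comp (app q) = (app q').comp (M.map h)

/-- A constant subdivision of `Q` subordinate to the module `Mo`, with regions the
fibers of `R : Q → ι`: each region `i` carries a vector space `V i` with
isomorphisms to the components of `Mo` over the region, and there is no monodromy:
the composite `V (R q₁) → Mo.X q₁ → Mo.X q₁' → V (R q₁')` only depends on the pair
of regions, not on the comparable pair chosen inside them. -/
structure ConstData (k Q ι : Type) [Field k] [PartialOrder Q] (R : Q → ι)
    (Mo : PMod k Q) where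
  V : ι → Type
  [vgrp : ∀ i, AddCommGroup (V i)]
  [vmod : ∀ i, Module k (V i)]
  φ : ∀ q, V (R q) ≃ₗ[k] Mo.X q
  mono : ∀ {q₁ q₁' q₂ q₂' : Q} (h₁ : q₁ ≤ q₁') (h₂ : q₂ ≤ q₂')
      (e : R q₁ = R q₂) (e' : R q₁' = R q₂') (x : V (R q₁)),
      (φ q₂').symm (Mo.map h₂ (φ q₂ (cast (congrArg V e) x)))
        = cast (congrArg V e') ((φ q₁').symm (Mo.map h₁ (φ q₁ x)))

attribute [instance] ConstData.vgrp ConstData.vmod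

/-- The constant upset generated by the region of `i`: the upward closure of the
fiber of `R` over `i`. -/
def upGen {ι : Type} (R : Q → ι) (i : ι) : Set Q := {q | ∃ a, R a = i ∧ a ≤ q}

/-- The downset cogenerated by the region of `i`: the downward closure of the
fiber of `R` over `i`.  (Its complement is the other kind of constant upset.) -/
def downCogen {ι : Type} (R : Q → ι) (i : ι) : Set Q := {q | ∃ a, R a = i ∧ q ≤ a}


section Aux

variable {ι : Type} {R : Q → ι} {Mo : PMod k Q}

/-- The "uptight profile" of a point: which constant upsets contain it. -/
def Pf (R : Q → ι) (q : Q) : ι → Prop × Prop :=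
  fun i => (q ∈ upGen R i, q ∈ downCogen R i)

lemma pf_up {a b : Q} (h : Pf R a = Pf R b) {i : ι} (ha : a ∈ upGen R i) :
    b ∈ upGen R i := by
  have h1 : (a ∈ upGen R i) = (b ∈ upGen R i) := congrArg Prod.fst (congrFun h i)
  exact h1 ▸ ha

lemma pf_down {a b : Q} (h : Pf R a = Pf R b) {i : ι} (ha : a ∈ downCogen R i) :
    b ∈ downCogen R i := by
  have h1 : (a ∈ downCogen R i) = (b ∈ downCogen R i) :=
    congrArg Prod.snd (congrFun h i)
  exact h1 ▸ ha

lemma exU {a b : Q} (h : Pf R a = Pf R b) : ∃ x, R x = R a ∧ x ≤ b :=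
  pf_up h ⟨a, rfl, le_rfl⟩

lemma exD {a b : Q} (h : Pf R a = Pf R b) : ∃ v, R v = R b ∧ a ≤ v :=
  pf_down h.symm ⟨b, rfl, le_rfl⟩

variable (C : ConstData k Q ι R Mo)

/-- Transport along an equality of regions, at the level of `V`. -/
def tauV {i j : ι} (e : i = j) : C.V i →ₗ[k] C.V j := by
  subst e; exact LinearMap.id

lemma tauV_apply {i j : ι} (e : i = j) (x : C.V i) :
    tauV C e x = cast (congrArg C.V e) x := by subst e; rfl

/-- Transport along an equality of regions, at the level of `Mo`. -/
def tau {p q : Q} (e : R p = R q) : Mo.X p →ₗ[k] Mo.X q :=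
  (C.φ q).toLinearMap ∘ₗ tauV C e ∘ₗ (C.φ p).symm.toLinearMap

lemma tau_apply {p q : Q} (e : R p = R q) (m : Mo.X p) :
    tau C e m = C.φ q (cast (congrArg C.V e) ((C.φ p).symm m)) := by
  simp [tau, tauV_apply]

lemma tau_refl {p : Q} (e : R p = R p) (m : Mo.X p) : tau C e m = m := by
  rw [tau_apply, Subsingleton.elim e rfl]
  simp

lemma tau_trans {p q s : Q} (e₁ : R p = R q) (e₂ : R q = R s) (m : Mo.X p) :
    tau C e₂ (tau C e₁ m) = tau C (e₁.trans e₂) m := by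
  rw [tau_apply, tau_apply, tau_apply, LinearEquiv.symm_apply_apply, cast_cast]

/-- The no-monodromy condition at the level of `Mo`. -/
lemma monoM {q₁ q₁' q₂ q₂' : Q} (h₁ : q₁ ≤ q₁') (h₂ : q₂ ≤ q₂')
    (e : R q₁ = R q₂) (e' : R q₁' = R q₂') (m : Mo.X q₁) :
    tau C e' (Mo.map h₁ m) = Mo.map h₂ (tau C e m) := by
  have H := C.mono h₁ h₂ e e' ((C.φ q₁).symm m)
  rw [LinearEquiv.apply_symm_apply] at H
  rw [tau_apply, tau_apply, ← H, LinearEquiv.apply_symm_apply]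

/-- The transfer map between two points in the same uptight region. -/
noncomputable def T {a b : Q} (h : Pf R a = Pf R b) : Mo.X a →ₗ[k] Mo.X b :=
  Mo.map (exU h).choose_spec.2 ∘ₗ tau C (exU h).choose_spec.1.symm

lemma T_eq {a b : Q} (h : Pf R a = Pf R b) {v : Q} (ev : R v = R b)
    (hav : a ≤ v) (m : Mo.X a) :
    T C h m = tau C ev (Mo.map hav m) := by
  unfold T
  simp only [LinearMap.comp_apply, LinearEquiv.coe_coe]
  exact (monoM C hav (exU h).choose_spec.2 (exU h).choose_spec.1.symm ev m).symm

lemma T_id {a : Q} (h : Pf R a = Pf R a) (m : Mo.X a) : T C h m = m := by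
  rw [T_eq C h (rfl : R a = R a) (le_refl a), Mo.map_refl]
  exact tau_refl C rfl m

lemma T_comp {a b c : Q} (hab : Pf R a = Pf R b) (hbc : Pf R b = Pf R c)
    (m : Mo.X a) : T C hbc (T C hab m) = T C (hab.trans hbc) m := by
  obtain ⟨v, ev, hbv⟩ := exD hbc
  rw [T_eq C hbc ev hbv]
  unfold T
  simp only [LinearMap.comp_apply, LinearEquiv.coe_coe]
  have hx2 := (exU hab).choose_spec.2
  have hx1 := (exU hab).choose_spec.1
  have hy2 := (exU (hab.trans hbc)).choose_spec.2
  have hy1 := (exU (hab.trans hbc)).choose_spec.1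
  have comp1 : Mo.map hbv (Mo.map hx2 (tau C hx1.symm m))
      = Mo.map (le_trans hx2 hbv) (tau C hx1.symm m) :=
    (DFunLike.congr_fun (Mo.map_comp hx2 hbv) _).symm
  rw [comp1, monoM C (le_trans hx2 hbv) hy2 (hx1.trans hy1.symm) ev, tau_trans]

lemma T_nat {q₁ q₁' q₂ q₂' : Q} (h₁ : q₁ ≤ q₁') (h₂ : q₂ ≤ q₂')
    (e : Pf R q₁ = Pf R q₂) (e' : Pf R q₁' = Pf R q₂') (m : Mo.X q₁) :
    T C e' (Mo.map h₁ m) = Mo.map h₂ (T C e m) := by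
  obtain ⟨v, ev, h1v⟩ := exD e'
  rw [T_eq C e' ev h1v]
  unfold T
  simp only [LinearMap.comp_apply, LinearEquiv.coe_coe]
  have hx2 := (exU e).choose_spec.2
  have hx1 := (exU e).choose_spec.1
  have comp1 : Mo.map h1v (Mo.map h₁ m) = Mo.map (le_trans h₁ h1v) m :=
    (DFunLike.congr_fun (Mo.map_comp h₁ h1v) _).symm
  have comp2 : Mo.map h₂ (Mo.map hx2 (tau C hx1.symm m))
      = Mo.map (le_trans hx2 h₂) (tau C hx1.symm m) :=
    (DFunLike.congr_fun (Mo.map_comp hx2 h₂) _).symm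
  rw [comp1, comp2]
  exact monoM C (le_trans h₁ h1v) (le_trans hx2 h₂) hx1.symm ev m

/-- The transfer isomorphism between two points in the same uptight region. -/
noncomputable def Teq {a b : Q} (h : Pf R a = Pf R b) : Mo.X a ≃ₗ[k] Mo.X b :=
  LinearEquiv.ofLinear (T C h) (T C h.symm)
    (by ext m
        simp only [LinearMap.comp_apply, LinearMap.id_apply]
        rw [T_comp]
        exact T_id C _ m)
    (by ext m
        simp only [LinearMap.comp_apply, LinearMap.id_apply]
        rw [T_comp]
        exact T_id C _ m)

lemma Teq_apply {a b : Q} (h : Pf R a = Pf R b) (m : Mo.X a) :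
    Teq C h m = T C h m := rfl

lemma Teq_symm_apply {a b : Q} (h : Pf R a = Pf R b) (m : Mo.X b) :
    (Teq C h).symm m = T C h.symm m := rfl

lemma main_aux {r r' q₁ q₂ q₁' q₂' : Q} (h₁ : q₁ ≤ q₁') (h₂ : q₂ ≤ q₂')
    (c₁ : Pf R r = Pf R q₁) (c₂ : Pf R r = Pf R q₂)
    (c₁' : Pf R r' = Pf R q₁') (c₂' : Pf R r' = Pf R q₂') (x : Mo.X r) :
    T C c₂'.symm (Mo.map h₂ (T C c₂ x)) = T C c₁'.symm (Mo.map h₁ (T C c₁ x)) := by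
  have e12 : Pf R q₁ = Pf R q₂ := c₁.symm.trans c₂
  have e12' : Pf R q₁' = Pf R q₂' := c₁'.symm.trans c₂'
  have step1 : T C c₂ x = T C e12 (T C c₁ x) := (T_comp C c₁ e12 x).symm
  rw [step1, ← T_nat C h₁ h₂ e12 e12' (T C c₁ x)]
  exact T_comp C e12' c₂'.symm (Mo.map h₁ (T C c₁ x))

lemma mono_main {r₁ r₂ r₁' r₂' q₁ q₂ q₁' q₂' : Q} (h₁ : q₁ ≤ q₁') (h₂ : q₂ ≤ q₂')
    (c₁ : Pf R r₁ = Pf R q₁) (c₂ : Pf R r₂ = Pf R q₂)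
    (c₁' : Pf R r₁' = Pf R q₁') (c₂' : Pf R r₂' = Pf R q₂')
    (er : r₁ = r₂) (er' : r₁' = r₂')
    (E : Mo.X r₁ = Mo.X r₂) (E' : Mo.X r₁' = Mo.X r₂') (x : Mo.X r₁) :
    (Teq C c₂').symm (Mo.map h₂ (Teq C c₂ (cast E x)))
      = cast E' ((Teq C c₁').symm (Mo.map h₁ (Teq C c₁ x))) := by
  subst er; subst er'
  rw [Subsingleton.elim E rfl, Subsingleton.elim E' rfl, cast_eq, cast_eq,
    Teq_apply, Teq_apply, Teq_symm_apply, Teq_symm_apply]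
  exact main_aux C h₁ h₂ c₁ c₂ c₁' c₂' x

/-- The setoid of uptight equivalence. -/
def pfSetoid (R : Q → ι) : Setoid Q :=
  ⟨fun a b => Pf R a = Pf R b, ⟨fun _ => rfl, Eq.symm, Eq.trans⟩⟩

end Aux

/-- Given a constant subdivision of `Q` subordinate to `Mo` (with regions the
fibers of `R`), the partition of `Q` into uptight regions for the set of constant
upsets (the upsets generated by regions and the complements of downsets
cogenerated by regions) is again a constant subdivision subordinate to `Mo`. -/
theorem statement9 {ι : Type} (R : Q → ι) (Mo : PMod k Q)
    (C : ConstData k Q ι R Mo) :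
    ∃ (ι' : Type) (R' : Q → ι'),
      (∀ a b : Q, R' a = R' b ↔
        ∀ i : ι, ((a ∈ upGen R i ↔ b ∈ upGen R i) ∧
                  (a ∈ downCogen R i ↔ b ∈ downCogen R i))) ∧
      Nonempty (ConstData k Q ι' R' Mo) := by
  classical
  refine ⟨Quotient (pfSetoid R), fun q => Quotient.mk (pfSetoid R) q, ?_, ?_⟩
  · intro a b
    constructor
    · intro h i
      have hp : Pf R a = Pf R b := Quotient.exact h
      have hi := congrFun hp i
      exact ⟨iff_of_eq (congrArg Prod.fst hi), iff_of_eq (congrArg Prod.snd hi)⟩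
    · intro h
      refine Quotient.sound ?_
      show Pf R a = Pf R b
      funext i
      exact Prod.ext (propext (h i).1) (propext (h i).2)
  · have hout : ∀ q : Q,
        Pf R (Quotient.out (Quotient.mk (pfSetoid R) q)) = Pf R q :=
      fun q => Quotient.exact (Quotient.out_eq (Quotient.mk (pfSetoid R) q))
    refine ⟨{ V := fun j => Mo.X (Quotient.out j)
              φ := fun q => Teq C (hout q)
              mono := ?_ }⟩
    intro q₁ q₁' q₂ q₂' h₁ h₂ e e' x
    exact mono_main C h₁ h₂ (hout q₁) (hout q₂) (hout q₁') (hout q₂')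
      (congrArg Quotient.out e) (congrArg Quotient.out e') _ _ x
end

section
/- Every downset D in a polyhedral partially ordered abelian group Q is the union over faces τ of Q_+ of its local τ-supports Γ_τ(D_τ), where D_τ = {q ∈ D : q + τ ⊆ D} and Γ_τ(D_τ) = {q ∈ D_τ : q ∉ (D_τ)_{τ'} for all faces τ' ⊄ τ}. -/
variable {Q : Type} [AddCommGroup Q]

/-- The partial order induced by a positive cone: `a ≼ b` iff `b - a` lies in the
cone. -/
def cle (Qp : AddSubmonoid Q) (a b : Q) : Prop := b - a ∈ Qp

/-- The positive cone has trivial unit group. -/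
def TrivUnits (Qp : AddSubmonoid Q) : Prop := ∀ x ∈ Qp, -x ∈ Qp → x = 0

/-- A face of the positive cone: a submonoid of `Qp` whose complement in `Qp` is a
monoid ideal of `Qp`. -/
def IsFace (Qp σ : AddSubmonoid Q) : Prop :=
  σ ≤ Qp ∧ ∀ x ∈ Qp, ∀ y ∈ Qp, x + y ∈ σ → x ∈ σ

/-- A downset for the cone order. -/
def IsDown (Qp : AddSubmonoid Q) (D : Set Q) : Prop :=
  ∀ a b : Q, cle Qp a b → b ∈ D → a ∈ D

/-- The localization of a subset `S` along a face `τ`: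
the elements `q ∈ S` with `q + τ ⊆ S`. -/
def loc (Qp : AddSubmonoid Q) (S : Set Q) (τ : AddSubmonoid Q) : Set Q :=
  {q | q ∈ S ∧ ∀ f ∈ τ, q + f ∈ S}

/-!
Given `q ∈ D`, Zorn's lemma gives a maximal face `τ` with `q ∈ D_τ`: faces along which `q`
localizes are closed under unions of chains. If moreover `q ∈ (D_τ)_{τ'}`, then `q + τ + τ' ⊆ D`,
so `q` localizes along the face generated by `τ + τ'` (as `D` is a downset); by maximality this
face is `τ`, whence `τ' ⊆ τ`.
-/

def faceGen (Qp N : AddSubmonoid Q) : AddSubmonoid Q where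
  carrier := {x | x ∈ Qp ∧ ∃ y ∈ Qp, x + y ∈ N}
  zero_mem' := ⟨Qp.zero_mem, 0, Qp.zero_mem, by simp⟩
  add_mem' := by
    rintro a b ⟨ha, y, hy, hay⟩ ⟨hb, z, hz, hbz⟩
    refine ⟨Qp.add_mem ha hb, y + z, Qp.add_mem hy hz, ?_⟩
    convert N.add_mem hay hbz using 1
    abel

section

variable {Qp : AddSubmonoid Q}

theorem faceGen_isFace (N : AddSubmonoid Q) : IsFace Qp (faceGen Qp N) :=
  ⟨fun _ hx => hx.1, fun x hx y hy ⟨_, z, hz, hxyz⟩ =>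
    ⟨hx, y + z, Qp.add_mem hy hz, by rwa [← add_assoc]⟩⟩

theorem le_faceGen {N : AddSubmonoid Q} (hN : N ≤ Qp) : N ≤ faceGen Qp N :=
  fun x hx => ⟨hN hx, 0, Qp.zero_mem, by rwa [add_zero]⟩

theorem loc_bot (S : Set Q) : loc Qp S ⊥ = S := by
  ext q
  simp [loc, AddSubmonoid.mem_bot]

theorem loc_loc_subset_loc_sup (S : Set Q) (τ τ' : AddSubmonoid Q) :
    loc Qp (loc Qp S τ) τ' ⊆ loc Qp S (τ ⊔ τ') := by
  rintro q ⟨⟨hq, -⟩, hq'⟩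
  refine ⟨hq, fun f hf => ?_⟩
  obtain ⟨g, hg, g', hg', rfl⟩ := AddSubmonoid.mem_sup.mp hf
  simpa [add_comm g, ← add_assoc] using (hq' g' hg').2 g hg

theorem IsDown.loc_subset_loc_faceGen {D : Set Q} (hD : IsDown Qp D) (N : AddSubmonoid Q) :
    loc Qp D N ⊆ loc Qp D (faceGen Qp N) := by
  rintro q ⟨hq, hqN⟩
  refine ⟨hq, fun x ⟨_, y, hy, hxy⟩ => hD _ _ ?_ (hqN _ hxy)⟩
  simpa [cle, add_assoc] using hy

theorem isFace_sSup_of_isChain {c : Set (AddSubmonoid Q)} (hne : c.Nonempty)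
    (hc : IsChain (· ≤ ·) c) (hfaces : ∀ σ ∈ c, IsFace Qp σ) : IsFace Qp (sSup c) := by
  refine ⟨sSup_le fun σ hσ => (hfaces σ hσ).1, fun x hx y hy hxy => ?_⟩
  obtain ⟨σ, hσ, hxyσ⟩ := (AddSubmonoid.mem_sSup_of_directedOn hne hc.directedOn).mp hxy
  exact le_sSup hσ ((hfaces σ hσ).2 x hx y hy hxyσ)

theorem mem_loc_sSup_of_isChain {S : Set Q} {q : Q} {c : Set (AddSubmonoid Q)}
    (hne : c.Nonempty) (hc : IsChain (· ≤ ·) c) (hq : ∀ σ ∈ c, q ∈ loc Qp S σ) :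
    q ∈ loc Qp S (sSup c) := by
  obtain ⟨σ₀, hσ₀⟩ := hne
  refine ⟨(hq σ₀ hσ₀).1, fun f hf => ?_⟩
  obtain ⟨σ, hσ, hfσ⟩ :=
    (AddSubmonoid.mem_sSup_of_directedOn ⟨σ₀, hσ₀⟩ hc.directedOn).mp hf
  exact (hq σ hσ).2 f hfσ

theorem IsDown.exists_maximal_face_mem_loc {D : Set Q} (hD : IsDown Qp D) {q : Q}
    (hq : q ∈ D) : ∃ τ, Maximal (fun σ => IsFace Qp σ ∧ q ∈ loc Qp D σ) τ := by
  have hstart : IsFace Qp (faceGen Qp ⊥) ∧ q ∈ loc Qp D (faceGen Qp ⊥) :=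
    ⟨faceGen_isFace ⊥, hD.loc_subset_loc_faceGen ⊥ ((loc_bot D).symm ▸ hq)⟩
  obtain ⟨τ, -, hτ⟩ := zorn_le_nonempty₀ {σ | IsFace Qp σ ∧ q ∈ loc Qp D σ}
    (fun c hcT hc σ hσ => ⟨sSup c,
      ⟨isFace_sSup_of_isChain ⟨σ, hσ⟩ hc fun σ hσ => (hcT hσ).1,
        mem_loc_sSup_of_isChain ⟨σ, hσ⟩ hc fun σ hσ => (hcT hσ).2⟩,
      fun _ => le_sSup⟩) _ hstart
  exact ⟨τ, hτ⟩

end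

theorem statement14_general (Qp : AddSubmonoid Q)
    (D : Set Q) (hD : IsDown Qp D) :
    D = ⋃ τ : {σ : AddSubmonoid Q // IsFace Qp σ},
          {q | q ∈ loc Qp D τ.1 ∧
            ∀ τ' : {σ : AddSubmonoid Q // IsFace Qp σ}, ¬ τ'.1 ≤ τ.1 →
              q ∉ loc Qp (loc Qp D τ.1) τ'.1} := by
  ext q
  simp only [Set.mem_iUnion, Set.mem_ofPred_eq]
  refine ⟨fun hq => ?_, fun ⟨_, hq, _⟩ => hq.1⟩
  obtain ⟨τ, ⟨hτ, hqτ⟩, hmax⟩ := hD.exists_maximal_face_mem_loc hq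
  refine ⟨⟨τ, hτ⟩, hqτ, fun ⟨τ', hτ'⟩ hτ'τ hqττ' => hτ'τ ?_⟩
  have hsup : τ ⊔ τ' ≤ faceGen Qp (τ ⊔ τ') := le_faceGen (sup_le hτ.1 hτ'.1)
  have hFτ : faceGen Qp (τ ⊔ τ') ≤ τ :=
    hmax ⟨faceGen_isFace _, hD.loc_subset_loc_faceGen _ (loc_loc_subset_loc_sup D τ τ' hqττ')⟩
      (le_sup_left.trans hsup)
  exact le_sup_right.trans (hsup.trans hFτ)

/-- Every downset `D` in a polyhedral partially ordered abelian group is the union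
over faces `τ` of its local `τ`-supports `Γ_τ(D_τ)`: the elements of the
localization `D_τ` not lying in `(D_τ)_{τ'}` for any face `τ' ⊄ τ`. -/
theorem statement14 (Qp : AddSubmonoid Q) (htriv : TrivUnits Qp)
    (hpoly : Finite {σ : AddSubmonoid Q // IsFace Qp σ})
    (D : Set Q) (hD : IsDown Qp D) :
    D = ⋃ τ : {σ : AddSubmonoid Q // IsFace Qp σ},
          {q | q ∈ loc Qp D τ.1 ∧
            ∀ τ' : {σ : AddSubmonoid Q // IsFace Qp σ}, ¬ τ'.1 ≤ τ.1 →
              q ∉ loc Qp (loc Qp D τ.1) τ'.1} :=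
  statement14_general Qp D hD
end

section
/- For a downset D in a partially ordered abelian group Q and a face τ of Q_+, the localization D_τ = {q ∈ D : q + τ ⊆ D} is a downset of Q and is a union of cosets of the subgroup Zτ generated by τ; that is, q ∈ D_τ implies q + Zτ ⊆ D_τ. -/
variable {Q : Type} [AddCommGroup Q]

/- Proof idea: translation preserves the cone order, so `D_τ` inherits being a downset
from `D`. Every element of `Zτ` is `t - s` with `s, t ∈ τ`; the set `D_τ` is closed under
adding `t` because `τ` is a submonoid, and under subtracting `s` because `s ≽ 0` and
`D_τ` is a downset. -/

theorem AddSubmonoid.exists_sub_eq_of_mem_closure {G : Type*} [AddCommGroup G]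
    {τ : AddSubmonoid G} {g : G} (hg : g ∈ AddSubgroup.closure (τ : Set G)) :
    ∃ t ∈ τ, ∃ s ∈ τ, t - s = g := by
  induction hg using AddSubgroup.closure_induction with
  | mem x hx => exact ⟨x, hx, 0, τ.zero_mem, sub_zero x⟩
  | zero => exact ⟨0, τ.zero_mem, 0, τ.zero_mem, sub_zero 0⟩
  | add x y _ _ hx hy =>
    obtain ⟨t, ht, s, hs, rfl⟩ := hx
    obtain ⟨t', ht', s', hs', rfl⟩ := hy
    exact ⟨t + t', τ.add_mem ht ht', s + s', τ.add_mem hs hs', by abel⟩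
  | neg x _ hx =>
    obtain ⟨t, ht, s, hs, rfl⟩ := hx
    exact ⟨s, hs, t, ht, (neg_sub t s).symm⟩

section Localization

variable {Qp τ : AddSubmonoid Q} {D : Set Q}

theorem cle_add_right {a b : Q} (h : cle Qp a b) (c : Q) : cle Qp (a + c) (b + c) := by
  rwa [cle, add_sub_add_right_eq_sub]

theorem cle_sub_self {s : Q} (hs : s ∈ Qp) (q : Q) : cle Qp (q - s) q := by
  rwa [cle, sub_sub_cancel]

theorem IsDown.loc (hD : IsDown Qp D) : IsDown Qp (loc Qp D τ) :=
  fun a b hab hb => ⟨hD a b hab hb.1, fun f hf => hD _ _ (cle_add_right hab f) (hb.2 f hf)⟩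

theorem add_mem_loc {q t : Q} (hq : q ∈ loc Qp D τ) (ht : t ∈ τ) : q + t ∈ loc Qp D τ :=
  ⟨hq.2 t ht, fun f hf => add_assoc q t f ▸ hq.2 (t + f) (τ.add_mem ht hf)⟩

theorem sub_mem_loc (hD : IsDown Qp D) (hτ : τ ≤ Qp) {q s : Q} (hq : q ∈ loc Qp D τ)
    (hs : s ∈ τ) : q - s ∈ loc Qp D τ :=
  hD.loc _ _ (cle_sub_self (hτ hs) q) hq

end Localization

theorem statement15_general (Qp : AddSubmonoid Q)
    (D : Set Q) (hD : IsDown Qp D) (τ : AddSubmonoid Q) (hτ : IsFace Qp τ) :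
    IsDown Qp (loc Qp D τ) ∧
    ∀ q ∈ loc Qp D τ, ∀ g ∈ AddSubgroup.closure (τ : Set Q), q + g ∈ loc Qp D τ := by
  refine ⟨hD.loc, fun q hq g hg => ?_⟩
  obtain ⟨t, ht, s, hs, rfl⟩ := AddSubmonoid.exists_sub_eq_of_mem_closure hg
  rw [← add_sub_assoc]
  exact sub_mem_loc hD hτ.1 (add_mem_loc hq ht) hs

/-- For a downset `D` in a partially ordered abelian group and a face `τ` of the
positive cone, the localization `D_τ` is a downset and is a union of cosets of the
subgroup generated by `τ`. -/
theorem statement15 (Qp : AddSubmonoid Q) (htriv : TrivUnits Qp)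
    (D : Set Q) (hD : IsDown Qp D) (τ : AddSubmonoid Q) (hτ : IsFace Qp τ) :
    IsDown Qp (loc Qp D τ) ∧
    ∀ q ∈ loc Qp D τ, ∀ g ∈ AddSubgroup.closure (τ : Set Q), q + g ∈ loc Qp D τ :=
  statement15_general Qp D hD τ hτ
end
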